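/- Let N ≥ 2 and p ≥ N+2, and let A ∈ ℝ^{m×m} (m = r + n(p−1)) be the VECM state matrix built from α, β ∈ ℝ^{n×r} and Φ_1, …, Φ_{p−1} ∈ ℝ^{n×n}. Let S_1 = (I_r, 0, …, 0) ∈ ℝ^{r×m} and let S_2 ∈ ℝ^{n×m} be the block row (0_{n×r}, I_n, I_n, …, I_n, 0, …, 0) with exactly N identity blocks I_n in the first N of the n-column blocks (these are the first two block rows of the stock-case blocking matrix S_ζ, so that (S_1; S_2)A^N consists of the first r+n rows of the blocked observation matrix C_b). Let λ ∈ ℂ with λ ≠ 0 and let q = (q_β', q_1', …, q_{p−1}')' satisfy Aq = λq. Then S_1 A^N q = λ^N q_β and S_2 A^N q = (Σ_{j=1}^N λ^j) q_1. Consequently, if q ≠ 0, α has full column rank r, and either Σ_{j=1}^N λ^j ≠ 0 or q_β ≠ 0, then C_b q ≠ 0, i.e. the eigenvector q does not lie in the kernel of the stock-case blocked observation matrix. -/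

import Mathlib

open Matrix

/-- The VECM state matrix A ∈ R^{m×m}, m = r + n(p-1) (here s = p-1), with
first block row (β'α + I_r, β'Φ₁, …, β'Φ_{p-1}), second block row
(α, Φ₁, …, Φ_{p-1}), blocks (j+2, j+1) equal to I_n, and all other blocks 0.
States are indexed by `Fin r ⊕ Fin s × Fin n`. -/
def vecmStateMatrix {R : Type*} [Ring R] {n r s : ℕ}
    (α β : Matrix (Fin n) (Fin r) R) (Φ : Fin s → Matrix (Fin n) (Fin n) R) :
    Matrix (Fin r ⊕ Fin s × Fin n) (Fin r ⊕ Fin s × Fin n) R :=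
  Matrix.of fun i j =>
    match i, j with
    | Sum.inl a, Sum.inl b => (βᵀ * α + 1 : Matrix (Fin r) (Fin r) R) a b
    | Sum.inl a, Sum.inr (k, b) => (βᵀ * Φ k : Matrix (Fin r) (Fin n) R) a b
    | Sum.inr (i, a), Sum.inl b => if i.val = 0 then α a b else 0
    | Sum.inr (i, a), Sum.inr (k, b) =>
        if i.val = 0 then Φ k a b
        else if i.val = k.val + 1 then (if a = b then (1 : R) else 0) else 0

/-- Stock case: with S₁ = (I_r, 0, …, 0) and S₂ = (0, I_n, …, I_n, 0, …, 0)
(N identity blocks) — the first two block rows of the stock-case blocking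
matrix S_ζ, so that (S₁; S₂)Aᴺ are the first r+n rows of C_b — and Aq = λq
(λ ≠ 0): S₁Aᴺq = λᴺ q_β and S₂Aᴺq = (∑_{j=1}^N λʲ) q₁.  Consequently, if
q ≠ 0, α has full column rank, and ∑_{j=1}^N λʲ ≠ 0 or q_β ≠ 0, then the
eigenvector q does not lie in the kernel of the blocked observation matrix. -/
theorem stmt7 (n r s N : ℕ) (hN : 2 ≤ N) (hs : N + 1 ≤ s)
    (α β : Matrix (Fin n) (Fin r) ℝ) (Φ : Fin s → Matrix (Fin n) (Fin n) ℝ)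
    (l : ℂ) (hl : l ≠ 0)
    (q : Fin r ⊕ Fin s × Fin n → ℂ)
    (hq : (vecmStateMatrix (α.map Complex.ofReal) (β.map Complex.ofReal)
        (fun k => (Φ k).map Complex.ofReal)).mulVec q = l • q) :
    let A : Matrix (Fin r ⊕ Fin s × Fin n) (Fin r ⊕ Fin s × Fin n) ℂ :=
      vecmStateMatrix (α.map Complex.ofReal) (β.map Complex.ofReal)
        fun k => (Φ k).map Complex.ofReal
    let S1 : Matrix (Fin r) (Fin r ⊕ Fin s × Fin n) ℂ :=
      Matrix.of fun a j =>
        match j with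
        | Sum.inl b => if a = b then 1 else 0
        | Sum.inr _ => 0
    let S2 : Matrix (Fin n) (Fin r ⊕ Fin s × Fin n) ℂ :=
      Matrix.of fun a j =>
        match j with
        | Sum.inl _ => 0
        | Sum.inr (k, b) => if k.val < N ∧ a = b then 1 else 0
    ((S1 * A ^ N).mulVec q = l ^ N • fun a => q (Sum.inl a)) ∧
    ((S2 * A ^ N).mulVec q
        = (∑ j ∈ Finset.Icc 1 N, l ^ j) • fun a => q (Sum.inr (⟨0, by omega⟩, a))) ∧
    (q ≠ 0 → α.rank = r →
      ((∑ j ∈ Finset.Icc 1 N, l ^ j) ≠ 0 ∨ (fun a => q (Sum.inl a)) ≠ 0) →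
      ((S1 * A ^ N).mulVec q ≠ 0 ∨ (S2 * A ^ N).mulVec q ≠ 0)) := by
  intro A S1 S2
  -- A^k q = l^k q
  have hApow : ∀ k : ℕ, (A ^ k).mulVec q = l ^ k • q := by
    intro k
    induction k with
    | zero => simp [Matrix.one_mulVec]
    | succ k ih =>
      rw [pow_succ, ← Matrix.mulVec_mulVec, hq, Matrix.mulVec_smul, ih, smul_smul, pow_succ,
        mul_comm]
  -- shift recurrence
  have hrec : ∀ (k : ℕ) (hk : k + 1 < s) (a : Fin n),
      q (Sum.inr (⟨k, Nat.lt_of_succ_lt hk⟩, a)) = l * q (Sum.inr (⟨k + 1, hk⟩, a)) := by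
    intro k hk a
    have h := congrFun hq (Sum.inr (⟨k + 1, hk⟩, a))
    have hsingle : (vecmStateMatrix (α.map Complex.ofReal) (β.map Complex.ofReal)
        (fun k => (Φ k).map Complex.ofReal)).mulVec q (Sum.inr (⟨k + 1, hk⟩, a))
        = q (Sum.inr (⟨k, Nat.lt_of_succ_lt hk⟩, a)) := by
      rw [Matrix.mulVec, dotProduct]
      rw [Finset.sum_eq_single (Sum.inr (⟨k, Nat.lt_of_succ_lt hk⟩, a))]
      · simp [vecmStateMatrix]
      · rintro (b | ⟨k', b⟩) _ hj
        · simp [vecmStateMatrix]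
        · have : ¬(k' = ⟨k, Nat.lt_of_succ_lt hk⟩ ∧ a = b) := by
            intro ⟨h1, h2⟩; exact hj (by rw [h1, h2])
          simp only [vecmStateMatrix, Matrix.of_apply]
          rcases eq_or_ne k'.val k with hk' | hk'
          · have : a ≠ b := fun hab => this ⟨Fin.ext hk', hab⟩
            simp [this, hk']
          · have : ¬ (k + 1 = k'.val + 1) := by omega
            simp [this, hk'.symm]
      · simp
    rw [hsingle] at h
    simpa using h
  -- q_0 = l^k q_k
  have hq0 : ∀ (k : ℕ) (hk : k < s) (a : Fin n),
      q (Sum.inr (⟨0, by omega⟩, a)) = l ^ k * q (Sum.inr (⟨k, hk⟩, a)) := by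
    intro k
    induction k with
    | zero => intro hk a; simp
    | succ k ih =>
      intro hk a
      rw [ih (by omega) a, hrec k hk a, pow_succ]
      ring
  -- S1 part
  have hS1 : (S1 * A ^ N).mulVec q = l ^ N • fun a => q (Sum.inl a) := by
    rw [← Matrix.mulVec_mulVec, hApow, Matrix.mulVec_smul]
    congr 1
    funext a
    show ∑ j, S1 a j * q j = q (Sum.inl a)
    rw [Fintype.sum_sum_type]
    simp [S1, Finset.sum_ite_eq]
  -- S2 part
  have hS2 : (S2 * A ^ N).mulVec q
      = (∑ j ∈ Finset.Icc 1 N, l ^ j) • fun a => q (Sum.inr (⟨0, by omega⟩, a)) := by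
    rw [← Matrix.mulVec_mulVec, hApow, Matrix.mulVec_smul]
    funext a
    show l ^ N * ∑ j, S2 a j * q j = _
    rw [Fintype.sum_sum_type]
    have hstep : ∀ j : Fin s × Fin n, S2 a (Sum.inr j) * q (Sum.inr j)
        = if j.1.val < N ∧ a = j.2 then q (Sum.inr j) else 0 := by
      rintro ⟨k, b⟩; simp [S2, ite_mul]
    simp only [hstep]
    have h1 : (∑ j : Fin s × Fin n, if j.1.val < N ∧ a = j.2 then q (Sum.inr j) else 0)
        = ∑ k : Fin s, if k.val < N then q (Sum.inr (k, a)) else 0 := by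
      rw [Fintype.sum_prod_type]
      refine Finset.sum_congr rfl fun k _ => ?_
      rcases lt_or_ge k.val N with h | h
      · simp only [h, true_and, if_true]
        rw [Finset.sum_ite_eq Finset.univ a (fun b => q (Sum.inr (k, b)))]
        simp
      · simp [Nat.not_lt.mpr h]
    have h0 : (∑ b : Fin r, S2 a (Sum.inl b) * q (Sum.inl b)) = 0 := by
      simp [S2]
    rw [h0, zero_add, h1, Finset.mul_sum]
    have h2 : ∀ k : Fin s, (if k.val < N then l ^ N * q (Sum.inr (k, a)) else 0)
        = (if k.val < N then l ^ (N - k.val) else 0) * q (Sum.inr (⟨0, by omega⟩, a)) := by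
      intro k
      rcases lt_or_ge k.val N with h | h
      · simp only [h, if_true, ite_mul]
        rw [hq0 k.val k.isLt a, ← mul_assoc, ← pow_add]
        have : N - k.val + k.val = N := by omega
        rw [this]
      · simp [Nat.not_lt.mpr h]
    simp only [mul_ite, mul_zero]
    calc (∑ k : Fin s, if k.val < N then l ^ N * q (Sum.inr (k, a)) else 0)
        = ∑ k : Fin s, (if k.val < N then l ^ (N - k.val) else 0) * q (Sum.inr (⟨0, by omega⟩, a)) :=
          Finset.sum_congr rfl fun k _ => h2 k
      _ = (∑ k : Fin s, if k.val < N then l ^ (N - k.val) else 0) * q (Sum.inr (⟨0, by omega⟩, a)) := by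
          rw [Finset.sum_mul]
      _ = (∑ j ∈ Finset.Icc 1 N, l ^ j) * q (Sum.inr (⟨0, by omega⟩, a)) := by
          congr 1
          rw [Fin.sum_univ_eq_sum_range (fun k => if k < N then l ^ (N - k) else 0) s]
          rw [← Finset.sum_filter]
          have hf : (Finset.range s).filter (· < N) = Finset.range N := by
            ext x; simp; omega
          rw [hf, ← Finset.sum_range_reflect,
            show Finset.Icc 1 N = Finset.Ico 1 (N + 1) from rfl,
            Finset.sum_Ico_eq_sum_range]
          refine Finset.sum_congr (by simp) fun j hj => ?_
          simp only [Finset.mem_range] at hj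
          congr 1
          omega
      _ = _ := rfl
  refine ⟨hS1, hS2, ?_⟩
  intro hqne hrank hor
  by_contra hcon
  push_neg at hcon
  obtain ⟨h1, h2⟩ := hcon
  rw [hS1] at h1
  rw [hS2] at h2
  have hqb : (fun a => q (Sum.inl a)) = 0 := by
    rcases smul_eq_zero.mp h1 with h | h
    · exact absurd h (pow_ne_zero N hl)
    · exact h
  rcases hor with hsum | hne
  · have hq0z : (fun a => q (Sum.inr (⟨0, by omega⟩, a))) = (0 : Fin n → ℂ) := by
      rcases smul_eq_zero.mp h2 with h | h
      · exact absurd h hsum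
      · exact h
    apply hqne
    funext j
    rcases j with b | ⟨k, a⟩
    · exact congrFun hqb b
    · have := hq0 k.val k.isLt a
      have h0 : q (Sum.inr (⟨0, by omega⟩, a)) = 0 := congrFun hq0z a
      rw [h0] at this
      have := (mul_eq_zero.mp this.symm).resolve_left (pow_ne_zero _ hl)
      simpa using this
  · exact hne hqb
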